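/- arXiv:2506.21642 — 9 statements merged into one kernel-verified Lean document; each statement's English description precedes it below -/
import Mathlib

section
/- Let f : ℝ → ℝ be a 1-periodic continuous function of bounded variation on [0,1] with total variation V_f. Then for any integer N ≥ 1, |(1/N) Σ_{n=1}^N f(n/N) − ∫_0^1 f(t) dt| ≤ V_f/(2N). -/
/-!
On each cell `[a, b]` of the partition by the points `n / N`, the mean of the endpoint values
differs from every `f t`, `t ∈ [a, b]`, by at most half the variation of `f` on `[a, b]`: the
variations on `[a, t]` and `[t, b]` add up to it. So the trapezoid rule errs by at most
`(b - a) / 2` times that variation on each cell, and these variations add up to `V_f`.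
By periodicity `f 0 = f 1`, so the composite trapezoid sum is exactly the Riemann sum
`(1 / N) ∑ f (n / N)`.
-/

open Set Finset MeasureTheory
open scoped ENNReal

theorem Finset.sum_range_average_succ_eq_sum_Icc {K : Type*} [DivisionRing K] [CharZero K]
    (u : ℕ → K) {n : ℕ} (hu : u 0 = u n) :
    ∑ i ∈ range n, (u i + u (i + 1)) / 2 = ∑ i ∈ Icc 1 n, u i := by
  have hshift : ∑ i ∈ range n, u (i + 1) = ∑ i ∈ Icc 1 n, u i := by
    rw [← Finset.Ico_add_one_right_eq_Icc, sum_Ico_eq_sum_range, Nat.add_sub_cancel]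
    simp only [add_comm 1]
  have hrot : ∑ i ∈ range n, u i = ∑ i ∈ range n, u (i + 1) := by
    have h := (sum_range_succ u n).symm.trans (sum_range_succ' u n)
    rw [← hu] at h
    exact add_right_cancel h
  rw [← sum_div, sum_add_distrib, ← hrot, add_self_div_two, hrot, hshift]

namespace BoundedVariationOn

variable {f : ℝ → ℝ} {a b : ℝ}

theorem intervalIntegrable (hf : BoundedVariationOn f (uIcc a b)) :
    IntervalIntegrable f volume a b := by
  obtain ⟨p, q, hp, hq, rfl⟩ := hf.locallyBoundedVariationOn.exists_monotoneOn_sub_monotoneOn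
  exact hp.intervalIntegrable.sub hq.intervalIntegrable

theorem abs_average_endpoints_sub_le (hf : BoundedVariationOn f (Icc a b)) {t : ℝ}
    (ht : t ∈ Icc a b) :
    |(f a + f b) / 2 - f t| ≤ (eVariationOn f (Icc a b)).toReal / 2 := by
  have hleft : BoundedVariationOn f (Icc a t) := hf.mono (Icc_subset_Icc_right ht.2)
  have hright : BoundedVariationOn f (Icc t b) := hf.mono (Icc_subset_Icc_left ht.1)
  have h₁ : |f a - f t| ≤ (eVariationOn f (Icc a t)).toReal := by
    simpa only [Real.dist_eq] using hleft.dist_le (left_mem_Icc.2 ht.1) (right_mem_Icc.2 ht.1)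
  have h₂ : |f b - f t| ≤ (eVariationOn f (Icc t b)).toReal := by
    simpa only [Real.dist_eq] using hright.dist_le (right_mem_Icc.2 ht.2) (left_mem_Icc.2 ht.2)
  have hsplit : (eVariationOn f (Icc a t)).toReal + (eVariationOn f (Icc t b)).toReal
      = (eVariationOn f (Icc a b)).toReal := by
    rw [← ENNReal.toReal_add hleft hright]
    simpa only [univ_inter] using
      congrArg ENNReal.toReal (eVariationOn.Icc_add_Icc f ht.1 ht.2 (mem_univ t))
  calc |(f a + f b) / 2 - f t| = |(f a - f t) + (f b - f t)| / 2 := by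
        rw [show (f a + f b) / 2 - f t = ((f a - f t) + (f b - f t)) / 2 by ring, abs_div,
          abs_two]
    _ ≤ (|f a - f t| + |f b - f t|) / 2 := by gcongr; exact abs_add_le _ _
    _ ≤ (eVariationOn f (Icc a b)).toReal / 2 := by linarith

theorem abs_trapezoid_sub_integral_le (hab : a ≤ b) (hf : BoundedVariationOn f (Icc a b)) :
    |(b - a) * ((f a + f b) / 2) - ∫ t in a..b, f t|
      ≤ (b - a) * (eVariationOn f (Icc a b)).toReal / 2 := by
  have hint : IntervalIntegrable f volume a b := intervalIntegrable (by rwa [uIcc_of_le hab])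
  have hbound : ∀ t ∈ uIoc a b, ‖(f a + f b) / 2 - f t‖ ≤ (eVariationOn f (Icc a b)).toReal / 2 :=
    fun t ht ↦ by
      rw [uIoc_of_le hab] at ht
      exact hf.abs_average_endpoints_sub_le (Ioc_subset_Icc_self ht)
  have := intervalIntegral.norm_integral_le_of_norm_le_const hbound
  rw [intervalIntegral.integral_sub intervalIntegrable_const hint, intervalIntegral.integral_const,
    smul_eq_mul, Real.norm_eq_abs, abs_of_nonneg (sub_nonneg.2 hab)] at this
  linarith

theorem abs_sum_trapezoid_sub_integral_le {x : ℕ → ℝ} (hx : Monotone x) {h : ℝ} {n : ℕ}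
    (hmesh : ∀ i < n, x (i + 1) - x i ≤ h) (hf : BoundedVariationOn f (Icc (x 0) (x n))) :
    |∑ i ∈ range n, (x (i + 1) - x i) * ((f (x i) + f (x (i + 1))) / 2) - ∫ t in x 0..x n, f t|
      ≤ h * (eVariationOn f (Icc (x 0) (x n))).toReal / 2 := by
  have hcell : ∀ i < n, BoundedVariationOn f (Icc (x i) (x (i + 1))) := fun i hi ↦
    hf.mono (Icc_subset_Icc (hx (Nat.zero_le i)) (hx hi))
  have hint : ∀ i < n, IntervalIntegrable f volume (x i) (x (i + 1)) := fun i hi ↦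
    intervalIntegrable (by rw [uIcc_of_le (hx i.le_succ)]; exact hcell i hi)
  rw [← intervalIntegral.sum_integral_adjacent_intervals hint, ← sum_sub_distrib,
    ← eVariationOn.sum' f hx, ENNReal.toReal_sum fun i hi ↦ hcell i (mem_range.1 hi), mul_sum,
    sum_div]
  refine (abs_sum_le_sum_abs _ _).trans (sum_le_sum fun i hi ↦ ?_)
  rw [Finset.mem_range] at hi
  calc _ ≤ (x (i + 1) - x i) * (eVariationOn f (Icc (x i) (x (i + 1)))).toReal / 2 :=
        (hcell i hi).abs_trapezoid_sub_integral_le (hx i.le_succ)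
    _ ≤ h * (eVariationOn f (Icc (x i) (x (i + 1)))).toReal / 2 := by gcongr; exact hmesh i hi

end BoundedVariationOn

theorem stmt4_general (f : ℝ → ℝ) (hper : Function.Periodic f 1)
    (hbv : BoundedVariationOn f (Set.Icc 0 1)) (N : ℕ) (hN : 1 ≤ N) :
    |(1 / (N : ℝ)) * ∑ n ∈ Finset.Icc 1 N, f ((n : ℝ) / N) - ∫ t in (0:ℝ)..1, f t|
      ≤ (eVariationOn f (Set.Icc 0 1)).toReal / (2 * N) := by
  have hNpos : (0 : ℝ) < N := by exact_mod_cast hN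
  set x : ℕ → ℝ := fun n ↦ n / N
  have hx : Monotone x := fun i j hij ↦ by simp only [x]; gcongr
  have hstep : ∀ i, x (i + 1) - x i = 1 / N := fun i ↦ by
    simp only [x]; push_cast; field_simp; ring
  have hx₀ : x 0 = 0 := by simp [x]
  have hx₁ : x N = 1 := div_self hNpos.ne'
  have hbv' : BoundedVariationOn f (Icc (x 0) (x N)) := by rwa [hx₀, hx₁]
  have key := hbv'.abs_sum_trapezoid_sub_integral_le hx fun i _ ↦ (hstep i).le
  have hriemann : ∑ i ∈ range N, (x (i + 1) - x i) * ((f (x i) + f (x (i + 1))) / 2)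
      = 1 / N * ∑ n ∈ Icc 1 N, f (n / N) := by
    simp only [hstep, ← mul_sum]
    congr 1
    have hend : f (x 0) = f (x N) := by simpa [hx₀, hx₁] using (hper 0).symm
    exact sum_range_average_succ_eq_sum_Icc (fun i ↦ f (x i)) hend
  rw [hriemann, hx₀, hx₁] at key
  convert key using 1
  ring

theorem stmt4 (f : ℝ → ℝ) (hper : Function.Periodic f 1) (hcont : Continuous f)
    (hbv : BoundedVariationOn f (Set.Icc 0 1)) (N : ℕ) (hN : 1 ≤ N) :
    |(1 / (N : ℝ)) * ∑ n ∈ Finset.Icc 1 N, f ((n : ℝ) / N) - ∫ t in (0:ℝ)..1, f t|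
      ≤ (eVariationOn f (Set.Icc 0 1)).toReal / (2 * N) :=
  stmt4_general f hper hbv N hN
end

section
/- For any integer b ≥ 2, the normalized Dirichlet kernel K_b(x) = sin(πbx)/(b sin(πx)) is decreasing and concave on the interval [0, 1/(2b−2)]. -/
open Classical
noncomputable def Kb (b : ℕ) (x : ℝ) : ℝ :=
  if ∃ n : ℤ, x = n then (-1 : ℝ) ^ (⌊x⌋ * ((b : ℤ) - 1))
  else Real.sin (Real.pi * b * x) / (b * Real.sin (Real.pi * x))

/-!
On `[0, 1)` the kernel is the average of the cosines `cos ((2j - b + 1) π x)`, `j < b`, since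
telescoping gives `sin θ · ∑ cos ((2j - b + 1) θ) = sin (b θ)`. On `[0, 1/(2b - 2)]` every
argument `(2j - b + 1) π x` has absolute value at most `π/2`, where `cos` is concave and, as a
function of `|(2j - b + 1) π x|`, decreasing. Both properties pass to the average.
-/

open Real Finset Set

theorem AntitoneOn.finset_sum {ι α : Type*} [Preorder α] {s : Set α} {t : Finset ι}
    {f : ι → α → ℝ} (hf : ∀ i ∈ t, AntitoneOn (f i) s) : AntitoneOn (fun x => ∑ i ∈ t, f i x) s :=
  fun _ hx _ hy hxy => Finset.sum_le_sum fun i hi => hf i hi hx hy hxy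

theorem ConcaveOn.finset_sum {ι E : Type*} [AddCommMonoid E] [Module ℝ E] {s : Set E}
    {t : Finset ι} {f : ι → E → ℝ}
    (hs : Convex ℝ s) (hf : ∀ i ∈ t, ConcaveOn ℝ s (f i)) :
    ConcaveOn ℝ s (fun x => ∑ i ∈ t, f i x) := by
  rw [← Finset.sum_fn]
  exact Finset.sum_induction f (ConcaveOn ℝ s) (fun _ _ => ConcaveOn.add)
    (concaveOn_const 0 hs) hf

theorem antitoneOn_cos_mul {c r : ℝ} (h : |c| * r ≤ π) :
    AntitoneOn (fun x => cos (c * x)) (Icc 0 r) := by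
  have hcos : EqOn (fun x => cos (|c| * x)) (fun x => cos (c * x)) (Icc 0 r) := fun x hx => by
    dsimp only
    rw [← cos_abs (c * x), abs_mul, abs_of_nonneg hx.1]
  refine AntitoneOn.congr (fun x hx y hy hxy => antitoneOn_cos ?_ ?_ ?_) hcos
  · exact ⟨by positivity [hx.1], (mul_le_mul_of_nonneg_left hx.2 (abs_nonneg c)).trans h⟩
  · exact ⟨by positivity [hy.1], (mul_le_mul_of_nonneg_left hy.2 (abs_nonneg c)).trans h⟩
  · exact mul_le_mul_of_nonneg_left hxy (abs_nonneg c)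

theorem concaveOn_cos_mul {c r : ℝ} (h : |c| * r ≤ π / 2) :
    ConcaveOn ℝ (Icc (-r) r) (fun x => cos (c * x)) := by
  refine (strictConcaveOn_cos_Icc.concaveOn.comp_linearMap (LinearMap.mul ℝ ℝ c)).subset
    (fun x hx => ?_) (convex_Icc _ _)
  have hcx : |c * x| ≤ π / 2 :=
    calc |c * x| = |c| * |x| := abs_mul c x
      _ ≤ |c| * r := mul_le_mul_of_nonneg_left (abs_le.mpr hx) (abs_nonneg c)
      _ ≤ π / 2 := h
  exact abs_le.mp hcx

theorem sum_range_cos_mul_mul_sin (b : ℕ) (θ : ℝ) :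
    (∑ j ∈ range b, cos ((2 * j - b + 1) * θ)) * sin θ = sin (b * θ) := by
  have htelescope : ∀ j ∈ range b, cos ((2 * j - b + 1) * θ) * sin θ
      = sin ((2 * (j + 1 : ℕ) - b) * θ) / 2 - sin ((2 * j - b) * θ) / 2 := fun j _ => by
    have h₁ : ((2 * (j + 1 : ℕ) : ℝ) - b) * θ = (2 * j - b + 1) * θ + θ := by push_cast; ring
    have h₂ : ((2 * j : ℝ) - b) * θ = (2 * j - b + 1) * θ - θ := by ring
    rw [h₁, h₂, sin_add, sin_sub]
    ring
  rw [Finset.sum_mul, Finset.sum_congr rfl htelescope,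
    Finset.sum_range_sub (fun j => sin ((2 * j - b) * θ) / 2)]
  simp only [Nat.cast_zero, mul_zero, zero_sub, neg_mul, sin_neg]
  rw [show ((2 * b : ℝ) - b) * θ = b * θ by ring]
  ring

theorem Kb_eq_average_cos {b : ℕ} (hb : 0 < b) {x : ℝ} (hx : x ∈ Set.Ico 0 1) :
    Kb b x = (b : ℝ)⁻¹ * ∑ j ∈ range b, cos ((2 * j - b + 1) * π * x) := by
  have hb' : (b : ℝ) ≠ 0 := by positivity
  rcases hx.1.eq_or_lt with rfl | hx₀
  · rw [Kb, if_pos ⟨0, by simp⟩]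
    simp [hb']
  · have hsin : sin (π * x) ≠ 0 := (sin_pos_of_pos_of_lt_pi (by positivity) (by
      nlinarith [pi_pos, hx.2])).ne'
    have hnotint : ¬∃ n : ℤ, x = n := by
      rintro ⟨n, rfl⟩
      have h0 : (0 : ℤ) < n := by exact_mod_cast hx₀
      have h1 : n < 1 := by exact_mod_cast hx.2
      omega
    rw [Kb, if_neg hnotint, show π * b * x = b * (π * x) by ring,
      ← sum_range_cos_mul_mul_sin b (π * x)]
    field_simp
    exact Finset.sum_congr rfl fun j _ => by ring_nf

theorem abs_two_mul_sub_add_one_le {b j : ℕ} (hj : j < b) :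
    |(2 * j : ℝ) - b + 1| ≤ b - 1 := by
  have hj' : (j : ℝ) + 1 ≤ b := by exact_mod_cast hj
  rw [abs_le]
  constructor <;> linarith [(j.cast_nonneg : (0 : ℝ) ≤ j)]

theorem abs_two_mul_sub_add_one_mul_pi_mul_le {b j : ℕ} (hb : 2 ≤ b) (hj : j < b) :
    |(2 * j - b + 1) * π| * (1 / (2 * (b : ℝ) - 2)) ≤ π / 2 := by
  have hb' : (2 : ℝ) ≤ b := by exact_mod_cast hb
  have hr : 1 / (2 * (b : ℝ) - 2) * (2 * b - 2) = 1 := one_div_mul_cancel (by linarith)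
  rw [abs_mul, abs_of_pos pi_pos, mul_assoc]
  calc |(2 * j : ℝ) - b + 1| * (π * (1 / (2 * b - 2)))
      ≤ (b - 1) * (π * (1 / (2 * b - 2))) :=
        mul_le_mul_of_nonneg_right (abs_two_mul_sub_add_one_le hj)
          (mul_nonneg pi_pos.le (one_div_nonneg.mpr (by linarith)))
    _ = π / 2 := by linear_combination (π / 2) * hr

theorem stmt7 (b : ℕ) (hb : 2 ≤ b) :
    AntitoneOn (Kb b) (Set.Icc 0 (1 / (2 * (b : ℝ) - 2))) ∧
      ConcaveOn ℝ (Set.Icc 0 (1 / (2 * (b : ℝ) - 2))) (Kb b) := by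
  have hfreq j (hj : j ∈ range b) := abs_two_mul_sub_add_one_mul_pi_mul_le hb (mem_range.mp hj)
  set r := 1 / (2 * (b : ℝ) - 2)
  have hb' : (2 : ℝ) ≤ b := by exact_mod_cast hb
  have hr₀ : 0 ≤ r := one_div_nonneg.mpr (by linarith)
  have hr : r < 1 := (one_div_le_one_div_of_le two_pos (by linarith)).trans_lt (by norm_num)
  have hK : EqOn (fun x => (b : ℝ)⁻¹ * ∑ j ∈ range b, cos ((2 * j - b + 1) * π * x)) (Kb b)
      (Icc 0 r) := fun x hx => (Kb_eq_average_cos (by omega) ⟨hx.1, hx.2.trans_lt hr⟩).symm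
  have hinv : (0 : ℝ) ≤ (b : ℝ)⁻¹ := by positivity
  constructor
  · refine AntitoneOn.congr ((monotone_mul_left_of_nonneg hinv).comp_antitoneOn ?_) hK
    exact AntitoneOn.finset_sum fun j hj =>
      antitoneOn_cos_mul ((hfreq j hj).trans (half_le_self pi_pos.le))
  · refine ConcaveOn.congr (ConcaveOn.smul hinv ?_) hK
    refine ConcaveOn.finset_sum (convex_Icc 0 r) fun j hj => ?_
    exact (concaveOn_cos_mul (hfreq j hj)).subset (Icc_subset_Icc (by linarith) le_rfl)
      (convex_Icc 0 r)
end

section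
/- For any integer b ≥ 2 and any real t with ‖t‖ ≤ 1/b (where ‖t‖ is the distance from t to the nearest integer), one has |sin(πbt)/(b sin(πt))| ≤ exp(−(π²/6)(b²−1)‖t‖²). -/
open Classical
/-- Distance from a real number to the nearest integer. -/
noncomputable def nint (x : ℝ) : ℝ := |x - round x|

/-! Put `u = nint t`. Shifting `t` by an integer and using that `sin` is odd,
`|sin (π k t)| = sin (π k u)` whenever `k u ≤ 1`, so it suffices to show
`sin (π b u) ≤ b sin (π u) exp (-(π²/6)(b²-1)u²)`. This follows by comparing the Euler products
`sin (π x) = π x ∏ₙ (1 - x²/n²)` at `x = b u` and `x = u` factor by factor,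
`1 - b²u²/n² ≤ (1 - u²/n²)(1 - (b²-1)u²/n²) ≤ (1 - u²/n²) exp (-(b²-1)u²/n²)`,
and summing `∑ₙ 1/n² = π²/6` in the exponent. -/

open Real Filter Finset Topology

lemma one_sub_sub_le_mul_exp_neg {a c : ℝ} (ha₀ : 0 ≤ a) (ha₁ : a ≤ 1) (hc : 0 ≤ c) :
    1 - a - c ≤ (1 - a) * exp (-c) :=
  calc 1 - a - c ≤ (1 - a) * (1 - c) := by nlinarith
    _ ≤ (1 - a) * exp (-c) :=
      mul_le_mul_of_nonneg_left (by linarith [add_one_le_exp (-c)]) (by linarith)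

lemma tendsto_sum_range_one_div_add_one_sq :
    Tendsto (fun N : ℕ => ∑ j ∈ range N, 1 / ((j : ℝ) + 1) ^ 2) atTop (𝓝 (π ^ 2 / 6)) := by
  simpa using ((hasSum_nat_add_iff' 1).mpr hasSum_zeta_two).tendsto_sum_nat

lemma prod_range_one_sub_sq_div_sq_le_mul_exp {x u : ℝ} (hx : 1 ≤ x) (hu : 0 ≤ u)
    (hxu : x * u ≤ 1) (N : ℕ) :
    ∏ j ∈ range N, (1 - (x * u) ^ 2 / ((j : ℝ) + 1) ^ 2) ≤
      (∏ j ∈ range N, (1 - u ^ 2 / ((j : ℝ) + 1) ^ 2)) *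
        exp (-((x ^ 2 - 1) * u ^ 2) * ∑ j ∈ range N, 1 / ((j : ℝ) + 1) ^ 2) := by
  rw [mul_sum, exp_sum, ← prod_mul_distrib]
  refine prod_le_prod (fun j _ => ?_) (fun j _ => ?_)
  · have : (x * u) ^ 2 ≤ ((j : ℝ) + 1) ^ 2 := by gcongr; linarith [j.cast_nonneg (α := ℝ)]
    rw [sub_nonneg]
    exact div_le_one_of_le₀ this (by positivity)
  · have hj : (0 : ℝ) < ((j : ℝ) + 1) ^ 2 := by positivity
    have hu_le : u ^ 2 ≤ ((j : ℝ) + 1) ^ 2 := by gcongr; nlinarith [j.cast_nonneg (α := ℝ)]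
    have hc : 0 ≤ (x ^ 2 - 1) * u ^ 2 / ((j : ℝ) + 1) ^ 2 :=
      div_nonneg (mul_nonneg (by nlinarith) (sq_nonneg u)) hj.le
    have hfactor := one_sub_sub_le_mul_exp_neg (by positivity) ((div_le_one hj).mpr hu_le) hc
    calc 1 - (x * u) ^ 2 / ((j : ℝ) + 1) ^ 2
        = 1 - u ^ 2 / ((j : ℝ) + 1) ^ 2 - (x ^ 2 - 1) * u ^ 2 / ((j : ℝ) + 1) ^ 2 := by ring
      _ ≤ _ := hfactor
      _ = _ := by ring_nf

theorem sin_pi_mul_mul_le {x u : ℝ} (hx : 1 ≤ x) (hu : 0 ≤ u) (hxu : x * u ≤ 1) :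
    sin (π * (x * u)) ≤ x * sin (π * u) * exp (-(π ^ 2 / 6) * (x ^ 2 - 1) * u ^ 2) := by
  have hexp := (continuous_exp.tendsto _).comp
    (tendsto_sum_range_one_div_add_one_sq.const_mul (-((x ^ 2 - 1) * u ^ 2)))
  have hlim := le_of_tendsto_of_tendsto' (tendsto_euler_sin_prod (x * u))
    (((tendsto_euler_sin_prod u).const_mul x).mul hexp) fun N => ?_
  · exact hlim.trans_eq (by ring_nf)
  · calc π * (x * u) * ∏ j ∈ range N, (1 - (x * u) ^ 2 / ((j : ℝ) + 1) ^ 2)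
        ≤ π * (x * u) * ((∏ j ∈ range N, (1 - u ^ 2 / ((j : ℝ) + 1) ^ 2)) *
          exp (-((x ^ 2 - 1) * u ^ 2) * ∑ j ∈ range N, 1 / ((j : ℝ) + 1) ^ 2)) := by
          gcongr
          exact prod_range_one_sub_sq_div_sq_le_mul_exp hx hu hxu N
      _ = _ := by
          simp only [Function.comp_apply]
          ring

lemma nint_pos {t : ℝ} (ht : ¬∃ n : ℤ, t = n) : 0 < nint t :=
  abs_pos.mpr (sub_ne_zero.mpr fun h => ht ⟨round t, h⟩)

lemma abs_sin_pi_mul_natCast_mul {k : ℕ} {t : ℝ} (h : k * nint t ≤ 1) :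
    |sin (π * (k * t))| = sin (π * (k * nint t)) := by
  have hperiod : π * (k * t) = π * (k * (t - round t)) + ((k * round t : ℤ) : ℝ) * π := by
    push_cast; ring
  have hsin : 0 ≤ sin (π * (k * nint t)) :=
    sin_nonneg_of_nonneg_of_le_pi (by unfold nint; positivity) (by nlinarith [pi_pos])
  rw [hperiod, sin_add_int_mul_pi, abs_mul, abs_neg_one_zpow, one_mul, ← abs_of_nonneg hsin]
  rcases abs_choice (t - round t) with h | h <;> simp only [nint, h, mul_neg, sin_neg, abs_neg]

theorem stmt8_general (b : ℕ) (t : ℝ) (ht : nint t ≤ 1 / b) :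
    |Kb b t| ≤ Real.exp (-(Real.pi ^ 2 / 6) * ((b : ℝ) ^ 2 - 1) * nint t ^ 2) := by
  by_cases hint : ∃ n : ℤ, t = n
  · obtain ⟨n, rfl⟩ := hint
    simp [Kb, nint]
  have hu := nint_pos hint
  have hb : (0 : ℝ) < b := one_div_pos.mp (hu.trans_le ht)
  have hbu : b * nint t ≤ 1 := by rwa [le_div_iff₀ hb, mul_comm] at ht
  have hu_half : nint t ≤ 1 / 2 := abs_sub_round t
  have hsin : 0 < sin (π * nint t) :=
    sin_pos_of_pos_of_lt_pi (by positivity) (by nlinarith [pi_pos])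
  have habs := abs_sin_pi_mul_natCast_mul (k := 1) (t := t) (by push_cast; linarith)
  rw [Kb, if_neg hint, abs_div, abs_mul, Nat.abs_cast, mul_assoc, abs_sin_pi_mul_natCast_mul hbu]
  simp only [Nat.cast_one, one_mul] at habs
  rw [habs, div_le_iff₀ (by positivity)]
  have hb1 : (1 : ℝ) ≤ b := Nat.one_le_cast.mpr (by exact_mod_cast hb)
  linarith [sin_pi_mul_mul_le hb1 hu.le hbu]

theorem stmt8 (b : ℕ) (hb : 2 ≤ b) (t : ℝ) (ht : nint t ≤ 1 / b) :
    |Kb b t| ≤ Real.exp (-(Real.pi ^ 2 / 6) * ((b : ℝ) ^ 2 - 1) * nint t ^ 2) :=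
  stmt8_general b t ht
end

section
/- For any integer b ≥ 2 and real numbers α, θ, one has max(‖αb − θ‖, ‖α − θb‖) ≥ max(‖α(b²−1)‖, ‖θ(b²−1)‖)/(b+1), where ‖·‖ denotes distance to the nearest integer. -/
theorem nint_eq_norm (x : ℝ) : nint x = ‖(x : AddCircle (1 : ℝ))‖ := by
  rw [AddCircle.norm_eq, nint]
  norm_num

theorem nint_neg (x : ℝ) : nint (-x) = nint x := by
  rw [nint_eq_norm, nint_eq_norm, QuotientAddGroup.mk_neg, norm_neg]

theorem nint_sub_le (x y : ℝ) : nint (x - y) ≤ nint x + nint y := by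
  simpa only [nint_eq_norm, QuotientAddGroup.mk_sub] using norm_sub_le _ _

theorem nint_natCast_mul_le (n : ℕ) (x : ℝ) : nint (n * x) ≤ n * nint x := by
  simpa only [nint_eq_norm, ← nsmul_eq_mul, QuotientAddGroup.mk_nsmul] using
    norm_nsmul_le (n := n) (a := (x : AddCircle (1 : ℝ)))

theorem nint_natCast_mul_sub_le (n : ℕ) (x y : ℝ) :
    nint (n * x - y) ≤ max (nint x) (nint y) * (n + 1) :=
  calc nint (n * x - y) ≤ n * nint x + nint y :=
        (nint_sub_le _ _).trans (add_le_add_left (nint_natCast_mul_le n x) _)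
    _ ≤ n * max (nint x) (nint y) + max (nint x) (nint y) := by gcongr <;> simp
    _ = max (nint x) (nint y) * (n + 1) := by ring

theorem stmt9_general (b : ℕ) (α θ : ℝ) :
    max (nint (α * ((b : ℝ) ^ 2 - 1))) (nint (θ * ((b : ℝ) ^ 2 - 1))) / ((b : ℝ) + 1)
      ≤ max (nint (α * b - θ)) (nint (α - θ * b)) := by
  rw [div_le_iff₀ (by positivity)]
  have hα : α * ((b : ℝ) ^ 2 - 1) = b * (α * b - θ) - (α - θ * b) := by ring
  have hθ : θ * ((b : ℝ) ^ 2 - 1) = b * -(α - θ * b) - -(α * b - θ) := by ring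
  refine max_le ?_ ?_
  · rw [hα]
    exact nint_natCast_mul_sub_le b _ _
  · rw [hθ, max_comm]
    simpa only [nint_neg] using nint_natCast_mul_sub_le b (-(α - θ * b)) (-(α * b - θ))

theorem stmt9 (b : ℕ) (hb : 2 ≤ b) (α θ : ℝ) :
    max (nint (α * ((b : ℝ) ^ 2 - 1))) (nint (θ * ((b : ℝ) ^ 2 - 1))) / ((b : ℝ) + 1)
      ≤ max (nint (α * b - θ)) (nint (α - θ * b)) :=
  stmt9_general b α θ
end

section
/- Define F_λ(α, θ) = b^{−λ} Σ_{0 ≤ n < b^λ} e(α R_λ(n) − θ n), where e(x) = exp(2πix). Then for any integer λ ≥ 1 and real α, θ, |F_λ(α, θ)| = Π_{j=0}^{λ−1} |K_b(α b^{λ−1−j} − θ b^j)|, where K_b(x) = sin(πbx)/(b sin(πx)) extended continuously to integers. -/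
/-- The `j`-th digit of `n` in base `b`. -/
def digit (b n j : ℕ) : ℕ := n / b ^ j % b

/-- The reverse of the `L` first digits of `n` in base `b`. -/
def rev (b L n : ℕ) : ℕ := ∑ j ∈ Finset.range L, digit b n j * b ^ (L - 1 - j)

/-- The exponential sum `F_λ(α,θ) = b^{-λ} ∑_{0 ≤ n < b^λ} e(α R_λ(n) - θ n)`. -/
noncomputable def Fl (b L : ℕ) (α θ : ℝ) : ℂ :=
  (1 / (b : ℂ) ^ L) * ∑ n ∈ Finset.range (b ^ L),
    Complex.exp (2 * Real.pi * Complex.I * ((α * (rev b L n : ℝ) - θ * n : ℝ) : ℂ))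

open Classical
/-!
Split `n < b ^ (λ + 1)` as `n = b q + r` with `r < b`: then `R_{λ+1}(n) = r b^λ + R_λ(q)`, so the
sum defining `F_{λ+1}(α, θ)` factors as a geometric sum over `r` times `F_λ(α, b θ)`. The geometric
sum has modulus `b |K_b(α b^λ - θ)|`, and induction on `λ` gives the product formula.
-/

open Finset Real

/-- The paper's `e(t) = exp(2πit)`. -/
noncomputable def e (t : ℝ) : ℂ := Complex.exp (2 * π * Complex.I * t)

lemma e_add (s t : ℝ) : e (s + t) = e s * e t := by
  rw [e, e, e, ← Complex.exp_add]; push_cast; ring_nf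

lemma e_natCast_mul (n : ℕ) (t : ℝ) : e (n * t) = e t ^ n := by
  rw [e, e, ← Complex.exp_nat_mul]; push_cast; ring_nf

lemma e_intCast (n : ℤ) : e n = 1 := by
  rw [e, ← Complex.exp_int_mul_two_pi_mul_I n]; push_cast; ring_nf

lemma norm_e_sub_one (t : ℝ) : ‖e t - 1‖ = 2 * |Real.sin (π * t)| := by
  have h := Complex.norm_exp_I_mul_ofReal_sub_one (2 * π * t)
  rw [show 2 * π * t / 2 = π * t by ring, norm_mul, Real.norm_eq_abs, Real.norm_eq_abs,
    abs_two] at h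
  rw [← h, e]; push_cast; ring_nf

lemma sin_pi_mul_eq_zero_iff (x : ℝ) : Real.sin (π * x) = 0 ↔ ∃ n : ℤ, x = n := by
  rw [Real.sin_eq_zero_iff]
  refine exists_congr fun n => ⟨fun h => ?_, fun h => by rw [h, mul_comm]⟩
  exact (mul_left_cancel₀ pi_ne_zero (by linarith)).symm

lemma norm_sum_range_e_mul (b : ℕ) (x : ℝ) :
    ‖∑ r ∈ range b, e (x * r)‖ = b * |Kb b x| := by
  simp_rw [mul_comm x, e_natCast_mul]
  by_cases hx : ∃ n : ℤ, x = n
  · obtain ⟨n, rfl⟩ := hx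
    simp [Kb, e_intCast]
  · have hsin : Real.sin (π * x) ≠ 0 := mt (sin_pi_mul_eq_zero_iff x).1 hx
    have he : e x ≠ 1 := fun h => hsin (by simpa [h] using (norm_e_sub_one x).symm)
    rw [geom_sum_eq he, norm_div, ← e_natCast_mul, norm_e_sub_one, norm_e_sub_one, Kb, if_neg hx,
      abs_div, abs_mul, Nat.abs_cast, ← mul_assoc π]
    rcases b.eq_zero_or_pos with rfl | hb
    · simp
    · field_simp

lemma sum_range_mul_eq_sum_sum {M : Type*} [AddCommMonoid M] (f : ℕ → M) (b B : ℕ) :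
    ∑ n ∈ range (b * B), f n = ∑ q ∈ range B, ∑ r ∈ range b, f (b * q + r) := by
  induction B with
  | zero => simp
  | succ B ih => rw [Nat.mul_succ, sum_range_add, ih, sum_range_succ]

lemma digit_mul_add_succ {b r : ℕ} (q j : ℕ) (hr : r < b) :
    digit b (b * q + r) (j + 1) = digit b q j := by
  rw [digit, digit, pow_succ', ← Nat.div_div_eq_div_mul, Nat.mul_add_div (by omega),
    Nat.div_eq_of_lt hr, add_zero]

lemma digit_mul_add_zero {b r : ℕ} (q : ℕ) (hr : r < b) : digit b (b * q + r) 0 = r := by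
  rw [digit, pow_zero, Nat.div_one, Nat.mul_add_mod, Nat.mod_eq_of_lt hr]

lemma rev_succ_mul_add {b r : ℕ} (L q : ℕ) (hr : r < b) :
    rev b (L + 1) (b * q + r) = r * b ^ L + rev b L q := by
  rw [rev, rev, sum_range_succ', digit_mul_add_zero q hr, add_comm]
  congr 1
  refine sum_congr rfl fun j _ => ?_
  rw [digit_mul_add_succ q j hr, show L + 1 - 1 - (j + 1) = L - 1 - j by omega]

lemma Fl_eq_sum_e (b L : ℕ) (α θ : ℝ) :
    Fl b L α θ = 1 / (b : ℂ) ^ L * ∑ n ∈ range (b ^ L), e (α * rev b L n - θ * n) := rfl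

lemma Fl_zero (b : ℕ) (α θ : ℝ) : Fl b 0 α θ = 1 := by
  simp [Fl_eq_sum_e, rev, e]

lemma Fl_succ (b L : ℕ) (α θ : ℝ) :
    Fl b (L + 1) α θ =
      (1 / (b : ℂ) * ∑ r ∈ range b, e ((α * b ^ L - θ) * r)) * Fl b L α (b * θ) := by
  have hterm : ∀ q, ∀ r ∈ range b,
      e (α * rev b (L + 1) (b * q + r) - θ * (b * q + r : ℕ)) =
        e ((α * b ^ L - θ) * r) * e (α * rev b L q - b * θ * q) := by
    intro q r hr
    rw [rev_succ_mul_add L q (mem_range.1 hr), ← e_add]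
    push_cast; ring_nf
  rw [Fl_eq_sum_e, Fl_eq_sum_e, Nat.pow_succ', sum_range_mul_eq_sum_sum]
  simp_rw [sum_congr rfl (hterm _), ← sum_mul, ← mul_sum]
  ring

theorem norm_Fl (b L : ℕ) (hb : b ≠ 0) (α θ : ℝ) :
    ‖Fl b L α θ‖ = ∏ j ∈ range L, |Kb b (α * (b : ℝ) ^ (L - 1 - j) - θ * (b : ℝ) ^ j)| := by
  induction L generalizing θ with
  | zero => simp [Fl_zero]
  | succ L ih =>
    have hshift : ∀ j ∈ range L, |Kb b (α * (b : ℝ) ^ (L + 1 - 1 - (j + 1)) - θ * b ^ (j + 1))| =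
        |Kb b (α * (b : ℝ) ^ (L - 1 - j) - b * θ * b ^ j)| := by
      intro j _
      rw [show L + 1 - 1 - (j + 1) = L - 1 - j by omega, pow_succ]
      ring_nf
    rw [Fl_succ, norm_mul, norm_mul, ih, norm_sum_range_e_mul, prod_range_succ',
      prod_congr rfl hshift, Nat.add_sub_cancel, Nat.sub_zero, pow_zero, mul_one]
    simp [field]

theorem stmt12_general (b L : ℕ) (hb : 2 ≤ b) (α θ : ℝ) :
    ‖Fl b L α θ‖ =
      ∏ j ∈ Finset.range L, |Kb b (α * (b : ℝ) ^ (L - 1 - j) - θ * (b : ℝ) ^ j)| :=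
  norm_Fl b L (by omega) α θ

theorem stmt12 (b L : ℕ) (hb : 2 ≤ b) (hL : 1 ≤ L) (α θ : ℝ) :
    ‖Fl b L α θ‖ =
      ∏ j ∈ Finset.range L, |Kb b (α * (b : ℝ) ^ (L - 1 - j) - θ * (b : ℝ) ^ j)| :=
  stmt12_general b L hb α θ
end

section
/- With F_λ(α, θ) = b^{−λ} Σ_{0 ≤ n < b^λ} e(α R_λ(n) − θ n), for any reals α, θ, θ' and any integer λ ≥ 0, one has ||F_λ(α, θ)|² − |F_λ(α, θ')|²| ≤ (2π/3) b^λ ‖θ − θ'‖, where ‖·‖ denotes distance to the nearest integer. -/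
/-!
Expanding `|S(θ)|² = ∑_{m,n} Re e(a_m - a_n - θ(m - n))` for `S(θ) = ∑_{n<N} e(a_n - θ n)`, the
`(m, n)` terms at `θ` and `θ'` differ by at most `‖e(x) - 1‖ ≤ 2π‖x‖` with `x = (n - m)(θ - θ')`,
hence by `2π |m - n| ‖θ - θ'‖`. Summing, `∑_{m,n<N} |m - n| = (N³ - N)/3 ≤ N³/3`, and dividing by
`N²` gives the bound. The digit reversal plays no role: any phases `a_n` work.
-/

open Complex Finset Real ComplexConjugate

lemma nint_le_abs_sub_intCast (x : ℝ) (k : ℤ) : nint x ≤ |x - k| := round_le x k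

lemma nint_intCast_mul_le (k : ℤ) (x : ℝ) : nint (k * x) ≤ |(k : ℝ)| * nint x :=
  calc nint (k * x) ≤ |k * x - ((k * round x : ℤ) : ℝ)| := nint_le_abs_sub_intCast _ _
    _ = |(k : ℝ)| * nint x := by push_cast; rw [← mul_sub, abs_mul]; rfl

lemma norm_exp_two_pi_I_mul_sub_one_le (x : ℝ) :
    ‖exp (2 * π * I * x) - 1‖ ≤ 2 * π * nint x := by
  have hper : exp (2 * π * I * x) = exp (I * ((2 * π * (x - round x) : ℝ) : ℂ)) := by
    rw [← exp_periodic.sub_int_mul_eq (round x)]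
    push_cast; ring_nf
  rw [hper]
  refine norm_exp_I_mul_ofReal_sub_one_le.trans_eq ?_
  rw [Real.norm_eq_abs, abs_mul, abs_of_pos two_pi_pos]
  rfl

lemma norm_exp_two_pi_I_mul_sub_exp_le (u v : ℝ) :
    ‖exp (2 * π * I * u) - exp (2 * π * I * v)‖ ≤ 2 * π * nint (u - v) := by
  have hfactor : exp (2 * π * I * u) - exp (2 * π * I * v)
      = exp (2 * π * I * v) * (exp (2 * π * I * ((u - v : ℝ) : ℂ)) - 1) := by
    rw [mul_sub, mul_one, ← Complex.exp_add]; push_cast; ring_nf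
  have hunit : ‖exp (2 * π * I * v)‖ = 1 := by
    rw [show 2 * π * I * v = ((2 * π * v : ℝ) : ℂ) * I by push_cast; ring]
    exact norm_exp_ofReal_mul_I _
  rw [hfactor, norm_mul, hunit, one_mul]
  exact norm_exp_two_pi_I_mul_sub_one_le _

lemma sq_norm_sum_exp_two_pi_I_mul {ι : Type*} (s : Finset ι) (φ : ι → ℝ) :
    ‖∑ n ∈ s, exp (2 * π * I * φ n)‖ ^ 2
      = ∑ m ∈ s, ∑ n ∈ s, (exp (2 * π * I * ((φ m - φ n : ℝ) : ℂ))).re := by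
  have hterm : ∀ m n, exp (2 * π * I * φ m) * conj (exp (2 * π * I * φ n))
      = exp (2 * π * I * ((φ m - φ n : ℝ) : ℂ)) := fun m n => by
    rw [← exp_conj, ← Complex.exp_add]; simp only [map_mul, conj_I, conj_ofReal, map_ofNat]
    push_cast; ring_nf
  rw [← normSq_eq_norm_sq, ← ofReal_re (normSq _), ← Complex.mul_conj, map_sum, sum_mul_sum,
    re_sum]
  simp only [hterm, re_sum]

lemma sum_range_abs_natCast_sub (N : ℕ) :
    ∑ n ∈ range N, |(N : ℝ) - n| = N * (N + 1) / 2 := by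
  have hid : ∑ n ∈ range N, (n : ℝ) = N * (N - 1) / 2 := by
    induction N with
    | zero => simp
    | succ N ih => rw [sum_range_succ, ih]; push_cast; ring
  have hpos : ∀ n ∈ range N, |(N : ℝ) - n| = N - n := fun n hn =>
    abs_of_nonneg (sub_nonneg.2 (by exact_mod_cast (mem_range.1 hn).le))
  rw [sum_congr rfl hpos, sum_sub_distrib, hid, sum_const, card_range, nsmul_eq_mul]
  ring

lemma sum_range_sum_range_abs_sub (N : ℕ) :
    ∑ m ∈ range N, ∑ n ∈ range N, |(m : ℝ) - n| = ((N : ℝ) ^ 3 - N) / 3 := by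
  induction N with
  | zero => simp
  | succ N ih =>
    simp only [sum_range_succ, sum_add_distrib, ih, sum_range_abs_natCast_sub]
    simp only [abs_sub_comm _ (N : ℝ), sum_range_abs_natCast_sub, sub_self, abs_zero]
    push_cast
    ring

lemma abs_sq_norm_sum_exp_sub_le (a : ℕ → ℝ) (N : ℕ) (θ θ' : ℝ) :
    |‖∑ n ∈ range N, exp (2 * π * I * ((a n - θ * n : ℝ) : ℂ))‖ ^ 2
        - ‖∑ n ∈ range N, exp (2 * π * I * ((a n - θ' * n : ℝ) : ℂ))‖ ^ 2|
      ≤ 2 * π * nint (θ - θ') * (((N : ℝ) ^ 3 - N) / 3) := by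
  rw [sq_norm_sum_exp_two_pi_I_mul, sq_norm_sum_exp_two_pi_I_mul, ← sum_range_sum_range_abs_sub,
    mul_sum]
  simp only [← sum_sub_distrib, mul_sum]
  refine (abs_sum_le_sum_abs _ _).trans (sum_le_sum fun m _ => ?_)
  refine (abs_sum_le_sum_abs _ _).trans (sum_le_sum fun n _ => ?_)
  have hphase : (a m - θ * m - (a n - θ * n)) - (a m - θ' * m - (a n - θ' * n))
      = ((n - m : ℤ) : ℝ) * (θ - θ') := by push_cast; ring
  calc |(exp (2 * π * I * ((a m - θ * m - (a n - θ * n) : ℝ) : ℂ))).re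
          - (exp (2 * π * I * ((a m - θ' * m - (a n - θ' * n) : ℝ) : ℂ))).re|
      ≤ ‖exp (2 * π * I * ((a m - θ * m - (a n - θ * n) : ℝ) : ℂ))
          - exp (2 * π * I * ((a m - θ' * m - (a n - θ' * n) : ℝ) : ℂ))‖ := by
        rw [← sub_re]; exact abs_re_le_norm _
    _ ≤ 2 * π * nint (((n - m : ℤ) : ℝ) * (θ - θ')) := by
        rw [← hphase]; exact norm_exp_two_pi_I_mul_sub_exp_le _ _
    _ ≤ 2 * π * nint (θ - θ') * |(m : ℝ) - n| := by
        have hk := nint_intCast_mul_le (n - m) (θ - θ')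
        rw [show |((n - m : ℤ) : ℝ)| = |(m : ℝ) - n| by push_cast; exact abs_sub_comm _ _] at hk
        exact (mul_le_mul_of_nonneg_left hk two_pi_pos.le).trans_eq (by ring)

lemma abs_sq_norm_average_exp_sub_le (a : ℕ → ℝ) (N : ℕ) (θ θ' : ℝ) :
    |‖(1 / (N : ℂ)) * ∑ n ∈ range N, exp (2 * π * I * ((a n - θ * n : ℝ) : ℂ))‖ ^ 2
        - ‖(1 / (N : ℂ)) * ∑ n ∈ range N, exp (2 * π * I * ((a n - θ' * n : ℝ) : ℂ))‖ ^ 2|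
      ≤ 2 * π / 3 * N * nint (θ - θ') := by
  have hnint : 0 ≤ nint (θ - θ') := abs_nonneg _
  simp only [norm_mul, mul_pow, norm_div, norm_one, Complex.norm_natCast, ← mul_sub, abs_mul]
  have hS := abs_sq_norm_sum_exp_sub_le a N θ θ'
  rw [abs_of_nonneg (by positivity), one_div, inv_pow, inv_mul_eq_div]
  refine div_le_of_le_mul₀ (by positivity) (by positivity) (hS.trans ?_)
  have hcube : (N : ℝ) ^ 3 - N ≤ N ^ 3 := sub_le_self _ N.cast_nonneg
  calc 2 * π * nint (θ - θ') * (((N : ℝ) ^ 3 - N) / 3)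
      ≤ 2 * π * nint (θ - θ') * ((N : ℝ) ^ 3 / 3) := by gcongr
    _ = 2 * π / 3 * N * nint (θ - θ') * N ^ 2 := by ring

theorem stmt15_general (b L : ℕ) (α θ θ' : ℝ) :
    |‖Fl b L α θ‖ ^ 2 - ‖Fl b L α θ'‖ ^ 2|
      ≤ (2 * Real.pi / 3) * (b : ℝ) ^ L * nint (θ - θ') := by
  simpa only [Fl, Nat.cast_pow] using
    abs_sq_norm_average_exp_sub_le (fun n => α * rev b L n) (b ^ L) θ θ'

theorem stmt15 (b L : ℕ) (hb : 2 ≤ b) (α θ θ' : ℝ) :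
    |‖Fl b L α θ‖ ^ 2 - ‖Fl b L α θ'‖ ^ 2|
      ≤ (2 * Real.pi / 3) * (b : ℝ) ^ L * nint (θ - θ') :=
  stmt15_general b L α θ θ'
end

section
/- For any integer b ≥ 2 and any real α with α ∉ ℤ, setting j₀ = ⌊log(b/((b+1)‖α‖))/log b⌋, one has j₀ ≥ 0 and ‖α b^{j₀}‖ ≥ 1/(b+1), where ‖·‖ denotes distance to the nearest integer. -/
lemma nint_pos_s16 {x : ℝ} (hx : ¬∃ n : ℤ, x = n) : 0 < nint x :=
  abs_pos.2 <| sub_ne_zero.2 fun h => hx ⟨round x, h⟩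

lemma nint_add_intCast (x : ℝ) (n : ℤ) : nint (x + n) = nint x := by
  simp [nint, round_add_intCast]

lemma nint_mul_intCast (x : ℝ) (n : ℤ) : nint (x * n) = nint ((x - round x) * n) := by
  rw [← nint_add_intCast ((x - round x) * n) (round x * n)]
  push_cast
  ring_nf

lemma nint_mul_natCast_zpow (x : ℝ) (b : ℕ) {j : ℤ} (hj : 0 ≤ j) :
    nint (x * (b : ℝ) ^ j) = nint ((x - round x) * (b : ℝ) ^ j) := by
  lift j to ℕ using hj
  exact_mod_cast nint_mul_intCast x (b ^ j)

lemma le_nint_of_le_abs_of_abs_le_one_sub {c y : ℝ} (h₁ : c ≤ |y|) (h₂ : |y| ≤ 1 - c) :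
    c ≤ nint y := by
  rcases eq_or_ne (round y) 0 with h | h
  · simpa [nint, h] using h₁
  · have h_round : (1 : ℝ) ≤ |(round y : ℝ)| := by exact_mod_cast Int.one_le_abs h
    have := abs_sub_abs_le_abs_sub (round y : ℝ) y
    rw [abs_sub_comm] at this
    unfold nint
    linarith

section IntLog

variable {b : ℕ} {c r : ℝ}

lemma mul_zpow_log_div_le (hb : 1 < b) (hc : 0 < c) (hr : 0 < r) :
    r * (b : ℝ) ^ Int.log b (c / r) ≤ c := by
  rw [mul_comm, ← le_div_iff₀ hr]
  exact Int.zpow_log_le_self hb (div_pos hc hr)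

lemma lt_mul_zpow_log_div_add_one (hb : 1 < b) (hr : 0 < r) :
    c < r * (b : ℝ) ^ (Int.log b (c / r) + 1) := by
  rw [mul_comm, ← div_lt_iff₀ hr]
  exact Int.lt_zpow_succ_log_self hb _

end IntLog

theorem stmt16 (b : ℕ) (hb : 2 ≤ b) (α : ℝ) (hα : ¬∃ n : ℤ, α = n) :
    0 ≤ ⌊Real.log ((b : ℝ) / (((b : ℝ) + 1) * nint α)) / Real.log b⌋ ∧
      1 / ((b : ℝ) + 1) ≤
        nint (α * (b : ℝ) ^ ⌊Real.log ((b : ℝ) / (((b : ℝ) + 1) * nint α)) / Real.log b⌋) := by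
  have hb₁ : 1 < b := hb
  have hb₂ : (2 : ℝ) ≤ b := by exact_mod_cast hb
  have hb₀ : (0 : ℝ) < b := by positivity
  have hε : 0 < nint α := nint_pos_s16 hα
  have hε_half : nint α ≤ 1 / 2 := abs_sub_round α
  have hr : 0 < ((b : ℝ) + 1) * nint α := by positivity
  have hx : 1 ≤ (b : ℝ) / (((b : ℝ) + 1) * nint α) := by
    rw [one_le_div hr]
    nlinarith
  rw [Real.log_div_log, Real.floor_logb_natCast (by positivity)]
  obtain ⟨j, hj_def⟩ : ∃ j, Int.log b ((b : ℝ) / (((b : ℝ) + 1) * nint α)) = j := ⟨_, rfl⟩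
  have hj : 0 ≤ j := hj_def ▸ (Int.zpow_le_iff_le_log hb₁ (by positivity)).1 (by simpa using hx)
  have h_upper := hj_def ▸ mul_zpow_log_div_le hb₁ (by positivity) hr
  have h_lower := hj_def ▸ lt_mul_zpow_log_div_add_one (c := (b : ℝ)) hb₁ hr
  rw [zpow_add_one₀ (by positivity)] at h_lower
  have h_abs : |(α - round α) * (b : ℝ) ^ j| = nint α * (b : ℝ) ^ j := by
    rw [abs_mul, abs_of_pos (zpow_pos hb₀ j), nint]
  rw [hj_def, nint_mul_natCast_zpow α b hj]
  refine ⟨hj, le_nint_of_le_abs_of_abs_le_one_sub ?_ ?_⟩ <;> rw [h_abs]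
  · rw [div_le_iff₀ (by positivity)]
    nlinarith
  · rw [one_sub_div (by positivity), add_sub_cancel_right, le_div_iff₀ (by positivity)]
    linarith
end

section
/- For all complex numbers z₁,…,z_N and all integers k ≥ 1, R ≥ 1, the van der Corput-type inequality holds: |Σ_{n=1}^N z_n|² ≤ ((N + kR − k)/R) · Re( Σ_{n=1}^N |z_n|² + 2 Σ_{r=1}^{R−1} (1 − r/R) Σ_{n=1}^{N−kr} z_{n+kr} · conj(z_n) ). -/
/-!
Van der Corput's trick. Extend `z` by zero and translate it by `K = k (R - 1)`, so that each of
the `R` shifted windows `m ↦ z̃ (m + k r)`, `m ∈ [1, N + K]`, `r < R`, covers all of `z`. Then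
`R ∑ z = ∑_m ∑_r z̃ (m + k r)`, and Cauchy–Schwarz in `m` bounds `R² |∑ z|²` by `N + K` times
`∑_{r, r'} Re ∑_m z̃ (m + k r) conj (z̃ (m + k r'))`. The inner sum is the autocorrelation of `z`
at lag `k |r - r'|`, and the `2 (R - d)` pairs with `|r - r'| = d ≥ 1` produce the weights
`1 - d / R`.
-/

open Finset ComplexConjugate

namespace VanDerCorput

theorem norm_sum_sum_sq_le {𝕜 ι κ : Type*} [RCLike 𝕜] (s : Finset ι) (t : Finset κ)
    (u : κ → ι → 𝕜) :
    ‖∑ r ∈ t, ∑ m ∈ s, u r m‖ ^ 2 ≤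
      #s * ∑ r ∈ t, ∑ r' ∈ t, RCLike.re (∑ m ∈ s, u r m * conj (u r' m)) := by
  have hsq (m : ι) :
      ‖∑ r ∈ t, u r m‖ ^ 2 = ∑ r ∈ t, ∑ r' ∈ t, RCLike.re (u r m * conj (u r' m)) := by
    rw [← RCLike.ofReal_re (K := 𝕜) (‖_‖ ^ 2 : ℝ), RCLike.ofReal_pow, ← RCLike.mul_conj, map_sum,
      sum_mul_sum]
    simp only [map_sum]
  calc ‖∑ r ∈ t, ∑ m ∈ s, u r m‖ ^ 2 = ‖∑ m ∈ s, ∑ r ∈ t, u r m‖ ^ 2 := by rw [sum_comm]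
    _ ≤ (∑ m ∈ s, ‖∑ r ∈ t, u r m‖) ^ 2 := by gcongr; exact norm_sum_le _ _
    _ ≤ #s * ∑ m ∈ s, ‖∑ r ∈ t, u r m‖ ^ 2 := sq_sum_le_card_mul_sum_sq
    _ = _ := by
      simp only [hsq, map_sum]
      rw [sum_comm]
      exact congrArg _ (sum_congr rfl fun r _ => sum_comm)

theorem sum_range_sum_range_dist {α : Type*} [CommRing α] (ψ : ℕ → α) (R : ℕ) :
    ∑ r ∈ range R, ∑ s ∈ range R, ψ (r.dist s) =
      R * ψ 0 + 2 * ∑ d ∈ Icc 1 R, ((R : α) - d) * ψ d := by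
  induction R with
  | zero => simp
  | succ R ih =>
    have hreflect : ∑ s ∈ range R, ψ (R - s) = ∑ d ∈ Icc 1 R, ψ d := by
      refine sum_nbij' (R - ·) (R - ·) ?_ ?_ ?_ ?_ fun _ _ => rfl <;>
        intro a ha <;> simp only [mem_range, mem_Icc] at ha ⊢ <;> omega
    have hdist : ∀ s ∈ range R, ψ (R.dist s) = ψ (R - s) := fun s hs => by
      rw [Nat.dist_eq_sub_of_le_right (mem_range.1 hs).le]
    simp only [sum_range_succ, sum_add_distrib, Nat.dist_comm _ R, sum_congr rfl hdist, hreflect,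
      ih, Nat.dist_self, sum_Icc_succ_top (Nat.le_add_left 1 R), Nat.cast_succ]
    simp only [sub_self, zero_mul, add_zero, add_sub_right_comm _ (1 : α), add_mul, one_mul,
      sum_add_distrib]
    ring

theorem sum_range_sum_range_dist_eq_mul {α : Type*} [Field α] [CharZero α] (ψ : ℕ → α)
    (R : ℕ) :
    ∑ r ∈ range R, ∑ s ∈ range R, ψ (r.dist s) =
      R * (ψ 0 + 2 * ∑ d ∈ Icc 1 (R - 1), (1 - (d : α) / R) * ψ d) := by
  rw [sum_range_sum_range_dist]
  rcases R with _ | R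
  · simp
  have hR : ((R + 1 : ℕ) : α) ≠ 0 := Nat.cast_ne_zero.2 R.succ_ne_zero
  simp only [sum_Icc_succ_top (Nat.le_add_left 1 R), Nat.add_sub_cancel, sub_self, zero_mul,
    add_zero, mul_add, mul_left_comm _ (2 : α), mul_sum]
  congr 3 with d
  field_simp

theorem sum_Icc_add_right {M : Type*} [AddCommMonoid M] (f : ℕ → M) (a b c : ℕ) :
    ∑ x ∈ Icc a b, f (x + c) = ∑ x ∈ Icc (a + c) (b + c), f x := by
  rw [← map_add_right_Icc, sum_map]
  rfl

theorem sum_Icc_add_of_support_subset {M : Type*} [AddCommMonoid M] {f : ℕ → M} {N K c : ℕ}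
    (hf : ∀ j, f j ≠ 0 → K < j ∧ j ≤ K + N) (hc : c ≤ K) :
    ∑ m ∈ Icc 1 (N + K), f (m + c) = ∑ n ∈ Icc 1 N, f (n + K) := by
  rw [sum_Icc_add_right, sum_Icc_add_right]
  refine (sum_subset (fun j hj => ?_) fun j _ hj => ?_).symm
  · simp only [mem_Icc] at hj ⊢
    omega
  · by_contra h
    have := hf j h
    simp only [mem_Icc] at hj
    omega

def shiftPad (z : ℕ → ℂ) (N K j : ℕ) : ℂ :=
  if K < j ∧ j ≤ K + N then z (j - K) else 0

def autocorr (z : ℕ → ℂ) (N h : ℕ) : ℂ :=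
  ∑ n ∈ Icc 1 (N - h), z (n + h) * conj (z n)

section shiftPad

variable (z : ℕ → ℂ) (N K : ℕ)

theorem shiftPad_support (j : ℕ) (hj : shiftPad z N K j ≠ 0) : K < j ∧ j ≤ K + N := by
  by_contra h
  exact hj (if_neg h)

theorem shiftPad_add_right (n : ℕ) :
    shiftPad z N K (n + K) = if 1 ≤ n ∧ n ≤ N then z n else 0 := by
  simp only [shiftPad, Nat.add_sub_cancel]
  congr 1
  apply propext
  omega

theorem sum_shiftPad {c : ℕ} (hc : c ≤ K) :
    ∑ m ∈ Icc 1 (N + K), shiftPad z N K (m + c) = ∑ n ∈ Icc 1 N, z n := by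
  rw [sum_Icc_add_of_support_subset (shiftPad_support z N K) hc]
  refine sum_congr rfl fun n hn => ?_
  rw [shiftPad_add_right, if_pos (mem_Icc.1 hn)]

theorem sum_shiftPad_mul_conj {c : ℕ} (hc : c ≤ K) (h : ℕ) :
    ∑ m ∈ Icc 1 (N + K), shiftPad z N K (m + c + h) * conj (shiftPad z N K (m + c)) =
      autocorr z N h := by
  have hsupp : ∀ j, shiftPad z N K (j + h) * conj (shiftPad z N K j) ≠ 0 → K < j ∧ j ≤ K + N :=
    fun j hj => shiftPad_support z N K j (by simpa using right_ne_zero_of_mul hj)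
  rw [sum_Icc_add_of_support_subset hsupp hc, autocorr]
  refine (sum_subset_zero_on_sdiff (Icc_subset_Icc le_rfl (N.sub_le h)) (fun n hn => ?_)
    fun n hn => ?_).symm
  · simp only [mem_sdiff, mem_Icc] at hn
    rw [add_right_comm, shiftPad_add_right, if_neg (by omega), zero_mul]
  · simp only [mem_Icc] at hn
    rw [add_right_comm, shiftPad_add_right, shiftPad_add_right, if_pos (by omega),
      if_pos (by omega)]

theorem re_sum_shiftPad_mul_conj {c c' : ℕ} (hc : c ≤ K) (hc' : c' ≤ K) :
    (∑ m ∈ Icc 1 (N + K), shiftPad z N K (m + c) * conj (shiftPad z N K (m + c'))).re =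
      (autocorr z N (c.dist c')).re := by
  wlog h : c' ≤ c generalizing c c'
  · rw [Nat.dist_comm, ← this hc' hc (le_of_not_ge h), ← Complex.conj_re, map_sum]
    simp only [map_mul, Complex.conj_conj, mul_comm]
  obtain ⟨d, rfl⟩ := Nat.exists_eq_add_of_le h
  simp only [← add_assoc, sum_shiftPad_mul_conj z N K hc', Nat.dist_eq_sub_of_le_right h,
    Nat.add_sub_cancel_left]

end shiftPad

theorem re_autocorr_zero (z : ℕ → ℂ) (N : ℕ) :
    (autocorr z N 0).re = ∑ n ∈ Icc 1 N, ‖z n‖ ^ 2 := by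
  simp [autocorr, Complex.mul_conj', ← Complex.ofReal_pow]

end VanDerCorput

open VanDerCorput

theorem stmt17_general (N k R : ℕ) (hR : 1 ≤ R) (z : ℕ → ℂ) :
    ‖∑ n ∈ Finset.Icc 1 N, z n‖ ^ 2 ≤
      (((N : ℝ) + k * R - k) / R) *
        (∑ n ∈ Finset.Icc 1 N, ‖z n‖ ^ 2 +
          2 * ∑ r ∈ Finset.Icc 1 (R - 1), (1 - (r : ℝ) / R) *
            (∑ n ∈ Finset.Icc 1 (N - k * r), z (n + k * r) * (starRingEnd ℂ) (z n)).re) := by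
  set K := k * (R - 1)
  set u : ℕ → ℕ → ℂ := fun r m => shiftPad z N K (m + k * r)
  have hkr : ∀ r ∈ range R, k * r ≤ K := fun r hr =>
    Nat.mul_le_mul_left k (Nat.le_sub_one_of_lt (mem_range.1 hr))
  have hsum : ∑ r ∈ range R, ∑ m ∈ Icc 1 (N + K), u r m = R * ∑ n ∈ Icc 1 N, z n := by
    rw [sum_congr rfl fun r hr => sum_shiftPad z N K (hkr r hr), sum_const, card_range,
      nsmul_eq_mul]
  have hcorr : ∀ r ∈ range R, ∀ r' ∈ range R,
      RCLike.re (∑ m ∈ Icc 1 (N + K), u r m * conj (u r' m)) =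
        (autocorr z N (k * r.dist r')).re := fun r hr r' hr' => by
    rw [RCLike.re_to_complex, re_sum_shiftPad_mul_conj z N K (hkr r hr) (hkr r' hr'),
      Nat.dist_mul_left]
  have hcard : ((#(Icc 1 (N + K)) : ℕ) : ℝ) = N + k * R - k := by
    rw [Nat.card_Icc, Nat.add_sub_cancel, Nat.cast_add, Nat.cast_mul, Nat.cast_sub hR]
    ring
  have key := norm_sum_sum_sq_le (Icc 1 (N + K)) (range R) u
  rw [hsum, sum_congr rfl fun r hr => sum_congr rfl (hcorr r hr),
    sum_range_sum_range_dist_eq_mul fun d => (autocorr z N (k * d)).re, mul_zero,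
    re_autocorr_zero, hcard, norm_mul, Complex.norm_natCast, mul_pow] at key
  unfold autocorr at key
  have hRpos : (0 : ℝ) < R := by exact_mod_cast hR
  rw [div_mul_eq_mul_div, le_div_iff₀ hRpos]
  exact le_of_mul_le_mul_left (by linear_combination key) hRpos

theorem stmt17 (N k R : ℕ) (hk : 1 ≤ k) (hR : 1 ≤ R) (z : ℕ → ℂ) :
    ‖∑ n ∈ Finset.Icc 1 N, z n‖ ^ 2 ≤
      (((N : ℝ) + k * R - k) / R) *
        (∑ n ∈ Finset.Icc 1 N, ‖z n‖ ^ 2 +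
          2 * ∑ r ∈ Finset.Icc 1 (R - 1), (1 - (r : ℝ) / R) *
            (∑ n ∈ Finset.Icc 1 (N - k * r), z (n + k * r) * (starRingEnd ℂ) (z n)).re) :=
  stmt17_general N k R hR z
end

section
/- Let μ ≥ 1 be an integer, b ≥ 2 an integer, and Φ : [0,1] → ℝ₊ any nonnegative function. Then Σ_{b^{μ−1} ≤ m < b^μ} (1/m) Σ_{0 ≤ k < m} Φ(k/m) ≤ b · Σ_{1 ≤ m' < b^μ} (1/m') Σ_{0 ≤ k' < m', gcd(k',m')=1} Φ(k'/m'). -/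
/-!
Writing each fraction `k / m` in lowest terms `k' / d` with `d ∣ m` turns `∑_{k < m} Φ (k / m)`
into the sum over `d ∣ m` of the sums of `Φ` over reduced fractions of denominator `d`.
After exchanging the sums, the reduced sum of denominator `d` carries the weight `∑ 1 / m` over
the multiples `m = d j` of `d` in `[b^(μ-1), b^μ)`. These `j` all lie within a factor `b` of the
smallest one, `j₀`, so there are fewer than `b j₀` of them, each with `1 / j ≤ 1 / j₀`: the
weight is at most `b / d`.
-/

open Finset

section ReducedFractions

variable {M : Type*} [AddCommMonoid M]

noncomputable def reducedFractionSum (Φ : ℝ → M) (d : ℕ) : M :=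
  ∑ k ∈ range d with k.gcd d = 1, Φ (k / d)

lemma sum_range_filter_gcd_mul_eq (Φ : ℝ → M) {d x : ℕ} (hd : 0 < d) :
    ∑ k ∈ range (d * x) with k.gcd (d * x) = d, Φ (k / (d * x : ℕ)) =
      reducedFractionSum Φ x := by
  symm
  refine sum_nbij' (d * ·) (· / d) ?_ ?_ ?_ ?_ ?_
  · intro k hk
    simp only [mem_filter, mem_range] at hk ⊢
    exact ⟨by gcongr; exact hk.1, by rw [Nat.gcd_mul_left, hk.2, mul_one]⟩
  · intro k hk
    simp only [mem_filter, mem_range] at hk ⊢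
    obtain ⟨q, rfl⟩ : d ∣ k := hk.2 ▸ Nat.gcd_dvd_left k (d * x)
    rw [Nat.mul_div_cancel_left q hd]
    rw [Nat.gcd_mul_left, mul_eq_left₀ hd.ne'] at hk
    exact ⟨(Nat.mul_lt_mul_left hd).1 hk.1, hk.2⟩
  · intro k _
    exact Nat.mul_div_cancel_left k hd
  · intro k hk
    simp only [mem_filter] at hk
    exact Nat.mul_div_cancel' (hk.2 ▸ Nat.gcd_dvd_left k (d * x))
  · intro k _
    have hd' : (d : ℝ) ≠ 0 := by exact_mod_cast hd.ne'
    push_cast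
    rw [mul_div_mul_left _ _ hd']

theorem sum_range_div_eq_sum_divisors (Φ : ℝ → M) (n : ℕ) :
    ∑ k ∈ range n, Φ (k / n) = ∑ d ∈ n.divisors, reducedFractionSum Φ d := by
  rcases n.eq_zero_or_pos with rfl | hn
  · simp
  have hgcd : ∀ k ∈ range n, k.gcd n ∈ n.divisors := fun k _ =>
    Nat.mem_divisors.2 ⟨Nat.gcd_dvd_right k n, hn.ne'⟩
  rw [← sum_fiberwise_of_maps_to hgcd, ← Nat.sum_div_divisors n (reducedFractionSum Φ)]
  refine sum_congr rfl fun d hd => ?_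
  have hd0 : 0 < d := Nat.pos_of_mem_divisors hd
  obtain ⟨x, rfl⟩ := Nat.dvd_of_mem_divisors hd
  rw [Nat.mul_div_cancel_left x hd0]
  exact sum_range_filter_gcd_mul_eq Φ hd0

end ReducedFractions

lemma sum_sum_divisors_eq_sum_Ico_sum_filter_dvd {M : Type*} [AddCommMonoid M]
    {s : Finset ℕ} {B : ℕ} (hs : s ⊆ Ico 1 B) (f : ℕ → ℕ → M) :
    ∑ m ∈ s, ∑ d ∈ m.divisors, f m d = ∑ d ∈ Ico 1 B, ∑ m ∈ s with d ∣ m, f m d := by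
  refine sum_comm' fun m d => ?_
  simp only [Nat.mem_divisors, mem_filter, mem_Ico]
  constructor
  · rintro ⟨hm, hdm, -⟩
    have hmB := mem_Ico.1 (hs hm)
    exact ⟨⟨hm, hdm⟩, Nat.pos_of_dvd_of_pos hdm hmB.1, (Nat.le_of_dvd hmB.1 hdm).trans_lt hmB.2⟩
  · rintro ⟨⟨hm, hdm⟩, -⟩
    exact ⟨hm, hdm, Nat.one_le_iff_ne_zero.1 (mem_Ico.1 (hs hm)).1⟩

lemma sum_one_div_le_of_forall_lt_mul {S : Finset ℕ} {b : ℕ}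
    (h : ∀ i ∈ S, ∀ j ∈ S, j < b * i) : ∑ j ∈ S, 1 / (j : ℝ) ≤ b := by
  rcases S.eq_empty_or_nonempty with rfl | hS
  · simp
  set i := S.min' hS
  have hi : 0 < i := Nat.pos_of_ne_zero fun h0 => by
    simpa [h0] using h i (S.min'_mem hS) i (S.min'_mem hS)
  have hcard : #S ≤ b * i := by
    calc #S ≤ #(Ico i (b * i)) := card_le_card fun j hj =>
            mem_Ico.2 ⟨S.min'_le j hj, h i (S.min'_mem hS) j hj⟩
      _ ≤ b * i := by simp
  have hi' : (0 : ℝ) < i := by exact_mod_cast hi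
  calc ∑ j ∈ S, 1 / (j : ℝ) ≤ #S • (1 / (i : ℝ)) := by
        refine sum_le_card_nsmul _ _ _ fun j hj => ?_
        gcongr
        exact S.min'_le j hj
    _ ≤ (b * i : ℕ) * (1 / (i : ℝ)) := by
        rw [nsmul_eq_mul]; gcongr
    _ = b := by push_cast; field_simp

lemma sum_one_div_le_div_of_forall_dvd {S : Finset ℕ} {b d : ℕ} (hd : ∀ m ∈ S, d ∣ m)
    (h : ∀ i ∈ S, ∀ j ∈ S, j < b * i) : ∑ m ∈ S, 1 / (m : ℝ) ≤ b / d := by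
  have hinj : Set.InjOn (· / d) S := fun m hm m' hm' (heq : m / d = m' / d) => by
    rw [← Nat.mul_div_cancel' (hd m hm), heq, Nat.mul_div_cancel' (hd m' hm')]
  have himage : ∀ i ∈ S.image (· / d), ∀ j ∈ S.image (· / d), j < b * i := by
    simp only [mem_image]
    rintro _ ⟨m, hm, rfl⟩ _ ⟨m', hm', rfl⟩
    rw [← Nat.mul_div_assoc b (hd m hm)]
    exact Nat.div_lt_div_of_lt_of_dvd ((hd m hm).mul_left b) (h m hm m' hm')
  calc ∑ m ∈ S, 1 / (m : ℝ) = ∑ m ∈ S, 1 / (d : ℝ) * (1 / ((m / d : ℕ) : ℝ)) := by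
        refine sum_congr rfl fun m hm => ?_
        conv_lhs => rw [← Nat.mul_div_cancel' (hd m hm)]
        push_cast
        rw [one_div_mul_one_div]
    _ = 1 / (d : ℝ) * ∑ j ∈ S.image (· / d), 1 / (j : ℝ) := by
        rw [sum_image hinj, mul_sum]
    _ ≤ 1 / (d : ℝ) * b := by
        gcongr
        exact sum_one_div_le_of_forall_lt_mul himage
    _ = b / d := by ring

theorem sum_Ico_one_div_mul_sum_range_le {Φ : ℝ → ℝ} (hΦ : ∀ x, 0 ≤ Φ x) {A B b : ℕ}
    (hB : B ≤ A * b) :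
    ∑ m ∈ Ico A B, 1 / (m : ℝ) * ∑ k ∈ range m, Φ (k / m)
      ≤ b * ∑ d ∈ Ico 1 B, 1 / (d : ℝ) * reducedFractionSum Φ d := by
  have hsub : Ico A B ⊆ Ico 1 B := fun m hm => by
    obtain ⟨hAm, hmB⟩ := mem_Ico.1 hm
    have : 0 < A := Nat.pos_of_mul_pos_right (b := b) (by omega)
    exact mem_Ico.2 ⟨by omega, hmB⟩
  have hlt : ∀ i ∈ Ico A B, ∀ j ∈ Ico A B, j < b * i := fun i hi j hj =>
    calc j < B := (mem_Ico.1 hj).2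
      _ ≤ A * b := hB
      _ ≤ b * i := by rw [mul_comm]; gcongr; exact (mem_Ico.1 hi).1
  calc ∑ m ∈ Ico A B, 1 / (m : ℝ) * ∑ k ∈ range m, Φ (k / m)
      = ∑ m ∈ Ico A B, ∑ d ∈ m.divisors, 1 / (m : ℝ) * reducedFractionSum Φ d := by
        simp only [sum_range_div_eq_sum_divisors, mul_sum]
    _ = ∑ d ∈ Ico 1 B, (∑ m ∈ Ico A B with d ∣ m, 1 / (m : ℝ)) * reducedFractionSum Φ d := by
        rw [sum_sum_divisors_eq_sum_Ico_sum_filter_dvd hsub]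
        simp only [sum_mul]
    _ ≤ ∑ d ∈ Ico 1 B, (b / d : ℝ) * reducedFractionSum Φ d := by
        gcongr with d
        · exact sum_nonneg fun _ _ => hΦ _
        · exact sum_one_div_le_div_of_forall_dvd (fun m hm => (mem_filter.1 hm).2)
            fun i hi j hj => hlt i (mem_filter.1 hi).1 j (mem_filter.1 hj).1
    _ = b * ∑ d ∈ Ico 1 B, 1 / (d : ℝ) * reducedFractionSum Φ d := by
        rw [mul_sum]
        exact sum_congr rfl fun d _ => by ring

theorem stmt18_general (b μ : ℕ) (hμ : 1 ≤ μ) (Φ : ℝ → ℝ) (hΦ : ∀ x, 0 ≤ Φ x) :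
    ∑ m ∈ Finset.Ico (b ^ (μ - 1)) (b ^ μ),
        (1 / (m : ℝ)) * ∑ k ∈ Finset.range m, Φ ((k : ℝ) / m)
      ≤ (b : ℝ) * ∑ m' ∈ Finset.Ico 1 (b ^ μ), (1 / (m' : ℝ)) *
          ∑ k' ∈ (Finset.range m').filter (fun k' => Nat.gcd k' m' = 1),
            Φ ((k' : ℝ) / m') := by
  refine sum_Ico_one_div_mul_sum_range_le hΦ (le_of_eq ?_)
  rw [← pow_succ, Nat.sub_add_cancel hμ]

theorem stmt18 (b μ : ℕ) (hb : 2 ≤ b) (hμ : 1 ≤ μ) (Φ : ℝ → ℝ) (hΦ : ∀ x, 0 ≤ Φ x) :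
    ∑ m ∈ Finset.Ico (b ^ (μ - 1)) (b ^ μ),
        (1 / (m : ℝ)) * ∑ k ∈ Finset.range m, Φ ((k : ℝ) / m)
      ≤ (b : ℝ) * ∑ m' ∈ Finset.Ico 1 (b ^ μ), (1 / (m' : ℝ)) *
          ∑ k' ∈ (Finset.range m').filter (fun k' => Nat.gcd k' m' = 1),
            Φ ((k' : ℝ) / m') :=
  stmt18_general b μ hμ Φ hΦ
end
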